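/- arXiv:2305.02256 — 2 statements merged into one kernel-verified Lean document; each statement's English description precedes it below -/
import Mathlib

section
/- For any sequences (μ_m, ν_m) in the probability simplex S^n converging in the Euclidean metric to (μ, ν) ∈ S^n × S^n, the Hilbert projective distance is lower semicontinuous: liminf_{m→∞} H(μ_m, ν_m) ≥ H(μ, ν). -/
open Filter Finset Topology

noncomputable section

/-- The probability simplex in ℝ^{n+1}. -/
def probSimplex (n : ℕ) : Set (EuclideanSpace ℝ (Fin (n+1))) :=
  {x | (∑ i, x i) = 1 ∧ ∀ i, 0 ≤ x i}

/-- The interior of the probability simplex: all coordinates strictly positive. -/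
def intSimplex (n : ℕ) : Set (EuclideanSpace ℝ (Fin (n+1))) :=
  {x | (∑ i, x i) = 1 ∧ ∀ i, 0 < x i}

/-- max over indices j with ν j > 0 of μ j / ν j. -/
def maxRatio {n : ℕ} (μ ν : EuclideanSpace ℝ (Fin (n+1))) : ℝ :=
  sSup {r | ∃ j, 0 < ν j ∧ r = μ j / ν j}

/-- min over indices j with ν j > 0 of μ j / ν j. -/
def minRatio {n : ℕ} (μ ν : EuclideanSpace ℝ (Fin (n+1))) : ℝ :=
  sInf {r | ∃ j, 0 < ν j ∧ r = μ j / ν j}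

/-- Hilbert projective distance on the simplex, ∞ if supports differ. -/
def hilbertDist {n : ℕ} (μ ν : EuclideanSpace ℝ (Fin (n+1))) : EReal :=
  if ∀ i, (0 < μ i ↔ 0 < ν i) then
    ((Real.log (maxRatio μ ν / minRatio μ ν) : ℝ) : EReal)
  else ⊤

/-!
Each index pair `(i, j)` gives the cross ratio `μ j ν i / (μ i ν j)`, and `H(μ, ν)` is the log of
the largest one (infinite exactly when some numerator is positive while its denominator vanishes).
So `c < H(μ, ν)` is witnessed by one pair with `exp c · μ i ν j < μ j ν i` and `μ j, ν i > 0`, an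
open condition in `(μ, ν)` that in turn forces `c < H` at every point satisfying it. Hence `H` is
lower semicontinuous, which is the `liminf` inequality.
-/

section

variable {n : ℕ}

lemma exists_pos_of_mem_probSimplex {x : EuclideanSpace ℝ (Fin (n+1))}
    (hx : x ∈ probSimplex n) : ∃ j, 0 < x j := by
  by_contra! h
  have : ∑ i, x i = 0 := Finset.sum_eq_zero fun i _ => le_antisymm (h i) (hx.2 i)
  simp [hx.1] at this

lemma ratios_finite (μ ν : EuclideanSpace ℝ (Fin (n+1))) :
    {r | ∃ j, 0 < ν j ∧ r = μ j / ν j}.Finite :=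
  (Set.finite_range fun j => μ j / ν j).subset (by rintro r ⟨j, -, rfl⟩; exact ⟨j, rfl⟩)

lemma exists_maxRatio_eq {μ ν : EuclideanSpace ℝ (Fin (n+1))} {k : Fin (n+1)} (hk : 0 < ν k) :
    ∃ j, 0 < ν j ∧ maxRatio μ ν = μ j / ν j :=
  Set.Nonempty.csSup_mem (by exact ⟨_, k, hk, rfl⟩) (ratios_finite μ ν)

lemma exists_minRatio_eq {μ ν : EuclideanSpace ℝ (Fin (n+1))} {k : Fin (n+1)} (hk : 0 < ν k) :
    ∃ j, 0 < ν j ∧ minRatio μ ν = μ j / ν j :=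
  Set.Nonempty.csInf_mem (by exact ⟨_, k, hk, rfl⟩) (ratios_finite μ ν)

lemma div_le_maxRatio {μ ν : EuclideanSpace ℝ (Fin (n+1))} {j : Fin (n+1)} (hj : 0 < ν j) :
    μ j / ν j ≤ maxRatio μ ν :=
  le_csSup (ratios_finite μ ν).bddAbove ⟨j, hj, rfl⟩

lemma minRatio_le_div {μ ν : EuclideanSpace ℝ (Fin (n+1))} {j : Fin (n+1)} (hj : 0 < ν j) :
    minRatio μ ν ≤ μ j / ν j :=
  csInf_le (ratios_finite μ ν).bddBelow ⟨j, hj, rfl⟩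

lemma minRatio_pos {μ ν : EuclideanSpace ℝ (Fin (n+1))} (hsupp : ∀ i, (0 < μ i ↔ 0 < ν i))
    {k : Fin (n+1)} (hk : 0 < ν k) : 0 < minRatio μ ν := by
  obtain ⟨j, hj, hmin⟩ := exists_minRatio_eq (μ := μ) hk
  exact hmin ▸ div_pos ((hsupp j).2 hj) hj

lemma coe_lt_hilbertDist_of_mul_lt {μ ν : EuclideanSpace ℝ (Fin (n+1))} {i j : Fin (n+1)}
    {c : ℝ} (hμj : 0 < μ j) (hνi : 0 < ν i) (hc : Real.exp c * (μ i * ν j) < μ j * ν i) :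
    (c : EReal) < hilbertDist μ ν := by
  unfold hilbertDist
  split_ifs with hsupp
  · have hμi : 0 < μ i := (hsupp i).2 hνi
    have hνj : 0 < ν j := (hsupp j).1 hμj
    have hcross : Real.exp c < (μ j / ν j) / (μ i / ν i) := by
      rw [div_div_div_eq, lt_div_iff₀ (by positivity)]
      linarith
    have hratio : (μ j / ν j) / (μ i / ν i) ≤ maxRatio μ ν / minRatio μ ν :=
      div_le_div₀ ((div_pos hμj hνj).le.trans (div_le_maxRatio hνj)) (div_le_maxRatio hνj)
        (minRatio_pos hsupp hνi) (minRatio_le_div hνi)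
    have hexp := hcross.trans_le hratio
    exact EReal.coe_lt_coe_iff.2 <|
      (Real.lt_log_iff_exp_lt ((Real.exp_pos c).trans hexp)).2 hexp
  · exact EReal.coe_lt_top c

lemma exists_mul_lt_of_coe_lt_hilbertDist {μ ν : EuclideanSpace ℝ (Fin (n+1))}
    (hμ : μ ∈ probSimplex n) (hν : ν ∈ probSimplex n) {c : ℝ}
    (hc : (c : EReal) < hilbertDist μ ν) :
    ∃ i j, 0 < μ j ∧ 0 < ν i ∧ Real.exp c * (μ i * ν j) < μ j * ν i := by
  obtain ⟨k, hμk⟩ := exists_pos_of_mem_probSimplex hμ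
  obtain ⟨l, hνl⟩ := exists_pos_of_mem_probSimplex hν
  unfold hilbertDist at hc
  split_ifs at hc with hsupp
  · obtain ⟨j, hνj, hmax⟩ := exists_maxRatio_eq (μ := μ) hνl
    obtain ⟨i, hνi, hmin⟩ := exists_minRatio_eq (μ := μ) hνl
    have hμj := (hsupp j).2 hνj
    have hμi := (hsupp i).2 hνi
    rw [EReal.coe_lt_coe_iff, hmax, hmin, Real.lt_log_iff_exp_lt (by positivity),
      div_div_div_eq, lt_div_iff₀ (by positivity)] at hc
    exact ⟨i, j, hμj, hνi, by linarith⟩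
  · -- at an index where exactly one of `μ`, `ν` vanishes the cross ratio is infinite
    obtain ⟨m, hm⟩ := not_forall.1 hsupp
    by_cases hμm : 0 < μ m
    · have hνm : ν m = 0 := le_antisymm (not_lt.1 fun h => hm (iff_of_true hμm h)) (hν.2 m)
      exact ⟨l, m, hμm, hνl, by simp [hνm]; positivity⟩
    · have hνm : 0 < ν m := by tauto
      have hμm : μ m = 0 := le_antisymm (not_lt.1 hμm) (hμ.2 m)
      exact ⟨m, k, hμk, hνm, by simp [hμm]; positivity⟩

lemma lowerSemicontinuousAt_hilbertDist {μ ν : EuclideanSpace ℝ (Fin (n+1))}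
    (hμ : μ ∈ probSimplex n) (hν : ν ∈ probSimplex n) :
    LowerSemicontinuousAt (fun p : EuclideanSpace ℝ (Fin (n+1)) × EuclideanSpace ℝ (Fin (n+1)) =>
      hilbertDist p.1 p.2) (μ, ν) := by
  intro y hy
  obtain ⟨c, hyc, hc⟩ := EReal.lt_iff_exists_real_btwn.1 hy
  obtain ⟨i, j, hμj, hνi, hcross⟩ := exists_mul_lt_of_coe_lt_hilbertDist hμ hν hc
  filter_upwards [
    ContinuousAt.eventually_lt (f := fun _ => 0) (g := fun p => p.1 j) (by fun_prop) (by fun_prop)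
      hμj,
    ContinuousAt.eventually_lt (f := fun _ => 0) (g := fun p => p.2 i) (by fun_prop) (by fun_prop)
      hνi,
    ContinuousAt.eventually_lt (f := fun p => Real.exp c * (p.1 i * p.2 j))
      (g := fun p => p.1 j * p.2 i) (by fun_prop) (by fun_prop) hcross] with p hpj hpi hpcross
  exact hyc.trans (coe_lt_hilbertDist_of_mul_lt hpj hpi hpcross)

end

theorem hilbert_liminf_general {n : ℕ} (μ ν : EuclideanSpace ℝ (Fin (n+1)))
    (μs νs : ℕ → EuclideanSpace ℝ (Fin (n+1)))
    (hμ : μ ∈ probSimplex n) (hν : ν ∈ probSimplex n)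
    (hconvμ : Tendsto μs atTop (𝓝 μ)) (hconvν : Tendsto νs atTop (𝓝 ν)) :
    hilbertDist μ ν ≤ liminf (fun m => hilbertDist (μs m) (νs m)) atTop :=
  (lowerSemicontinuousAt_hilbertDist hμ hν).le_liminf.trans
    (hconvμ.prodMk_nhds hconvν).liminf_le_liminf_comp

theorem hilbert_liminf {n : ℕ} (μ ν : EuclideanSpace ℝ (Fin (n+1)))
    (μs νs : ℕ → EuclideanSpace ℝ (Fin (n+1)))
    (hμ : μ ∈ probSimplex n) (hν : ν ∈ probSimplex n)
    (hμs : ∀ m, μs m ∈ probSimplex n) (hνs : ∀ m, νs m ∈ probSimplex n)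
    (hconvμ : Tendsto μs atTop (𝓝 μ)) (hconvν : Tendsto νs atTop (𝓝 ν)) :
    hilbertDist μ ν ≤ liminf (fun m => hilbertDist (μs m) (νs m)) atTop :=
  hilbert_liminf_general μ ν μs νs hμ hν hconvμ hconvν
end
end

section
/- Let π, π̃ be in the interior of the probability simplex, let i* maximize and k* minimize π^j/π̃^j, set M = π^{i*}/π̃^{i*}, 1/m = π^{k*}/π̃^{k*}, and let q_{ik}, q_{ki} ≥ 0. Then q_{i*k*}(π^{i*}/π^{k*} − π̃^{i*}/π̃^{k*}) + q_{k*i*}(π̃^{k*}/π̃^{i*} − π^{k*}/π^{i*}) ≥ 2√(q_{i*k*} q_{k*i*}) · (Mm − 1)/√(Mm) = 4√(q_{i*k*} q_{k*i*}) · sinh( H(π,π̃)/2 ). -/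
/-!
Write `r = π^{i*}/π^{k*}` and `r' = π̃^{i*}/π̃^{k*}`, so that `Mm = r / r' ≥ 1`. The drift factors as
`q₁ (r - r') + q₂ (1/r' - 1/r) = ((r - r') / √(r r')) · (q₁ b + q₂ / b)` with `b = √(r r')`;
AM–GM bounds the second factor below by `2 √(q₁ q₂)`, and the first factor is
`(Mm - 1) / √(Mm) = 2 sinh (log (Mm) / 2)`.
-/

open Finset

noncomputable section

section

open Real

lemma two_mul_sqrt_mul_le_mul_add_div {q₁ q₂ b : ℝ} (hq₁ : 0 ≤ q₁) (hq₂ : 0 ≤ q₂) (hb : 0 < b) :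
    2 * √(q₁ * q₂) ≤ q₁ * b + q₂ / b := by
  have hsplit : √(q₁ * q₂) = √(q₁ * b) * √(q₂ / b) := by
    rw [← sqrt_mul (by positivity)]
    field_simp
  have h := two_mul_le_add_sq √(q₁ * b) √(q₂ / b)
  rw [sq_sqrt (by positivity), sq_sqrt (by positivity)] at h
  rw [hsplit, ← mul_assoc]
  exact h

lemma sub_one_div_sqrt_eq_two_mul_sinh {x : ℝ} (hx : 0 < x) :
    (x - 1) / √x = 2 * sinh (log x / 2) := by
  have ht : 0 < √x := sqrt_pos.2 hx
  rw [← log_sqrt hx.le, sinh_log ht]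
  field_simp
  rw [sq_sqrt hx.le]

lemma two_mul_sqrt_mul_mul_le_mul_sub_add_mul_inv_sub {q₁ q₂ r r' : ℝ} (hq₁ : 0 ≤ q₁) (hq₂ : 0 ≤ q₂)
    (hr' : 0 < r') (hle : r' ≤ r) :
    2 * √(q₁ * q₂) * ((r / r' - 1) / √(r / r')) ≤ q₁ * (r - r') + q₂ * (r'⁻¹ - r⁻¹) := by
  have hr : 0 < r := hr'.trans_le hle
  set b := √(r * r') with hb
  have hbpos : 0 < b := sqrt_pos.2 (by positivity)
  have hb2 : b ^ 2 = r * r' := sq_sqrt (by positivity)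
  have hfactor : (r / r' - 1) / √(r / r') = (r - r') / b := by
    rw [sqrt_div' _ hr'.le, hb, sqrt_mul hr.le]
    have hsqrt_r' : 0 < √r' := sqrt_pos.2 hr'
    field_simp
    rw [sq_sqrt hr'.le]
    ring
  have hdrift : q₁ * (r - r') + q₂ * (r'⁻¹ - r⁻¹) = (r - r') / b * (q₁ * b + q₂ / b) := by
    field_simp
    rw [hb2]
    ring
  rw [hfactor, hdrift, mul_comm _ ((r - r') / b)]
  exact mul_le_mul_of_nonneg_left (two_mul_sqrt_mul_le_mul_add_div hq₁ hq₂ hbpos)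
    (div_nonneg (sub_nonneg.2 hle) hbpos.le)

end

theorem drift_amgm_sinh_bound_general {n : ℕ} (π π' : EuclideanSpace ℝ (Fin (n+1)))
    (hπ : π ∈ intSimplex n) (hπ' : π' ∈ intSimplex n)
    (istar kstar : Fin (n+1))
    (hmin : ∀ j, π kstar / π' kstar ≤ π j / π' j)
    (q₁ q₂ : ℝ) (hq₁ : 0 ≤ q₁) (hq₂ : 0 ≤ q₂)
    (M m : ℝ) (hM : M = π istar / π' istar) (hm : 1 / m = π kstar / π' kstar) :
    2 * Real.sqrt (q₁ * q₂) * ((M * m - 1) / Real.sqrt (M * m))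
      ≤ q₁ * (π istar / π kstar - π' istar / π' kstar)
        + q₂ * (π' kstar / π' istar - π kstar / π istar) ∧
    2 * Real.sqrt (q₁ * q₂) * ((M * m - 1) / Real.sqrt (M * m))
      = 4 * Real.sqrt (q₁ * q₂) * Real.sinh (Real.log (M * m) / 2) := by
  have hpi := hπ.2 istar
  have hpk := hπ.2 kstar
  have hpi' := hπ'.2 istar
  have hpk' := hπ'.2 kstar
  have hMm : M * m = (π istar / π kstar) / (π' istar / π' kstar) := by
    rw [hM, ← one_div_one_div m, hm, one_div_div]
    field_simp
  have hle : π' istar / π' kstar ≤ π istar / π kstar := by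
    have := hmin istar
    rw [div_le_div_iff₀ hpk' hpi'] at this
    rw [div_le_div_iff₀ hpk' hpk]
    linarith
  constructor
  · rw [hMm, ← inv_div (π' istar), ← inv_div (π istar)]
    exact two_mul_sqrt_mul_mul_le_mul_sub_add_mul_inv_sub hq₁ hq₂ (by positivity) hle
  · rw [sub_one_div_sqrt_eq_two_mul_sinh (by rw [hMm]; positivity)]
    ring

theorem drift_amgm_sinh_bound {n : ℕ} (π π' : EuclideanSpace ℝ (Fin (n+1)))
    (hπ : π ∈ intSimplex n) (hπ' : π' ∈ intSimplex n)
    (istar kstar : Fin (n+1))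
    (hmax : ∀ j, π j / π' j ≤ π istar / π' istar)
    (hmin : ∀ j, π kstar / π' kstar ≤ π j / π' j)
    (q₁ q₂ : ℝ) (hq₁ : 0 ≤ q₁) (hq₂ : 0 ≤ q₂)
    (M m : ℝ) (hM : M = π istar / π' istar) (hm : 1 / m = π kstar / π' kstar) :
    2 * Real.sqrt (q₁ * q₂) * ((M * m - 1) / Real.sqrt (M * m))
      ≤ q₁ * (π istar / π kstar - π' istar / π' kstar)
        + q₂ * (π' kstar / π' istar - π kstar / π istar) ∧
    2 * Real.sqrt (q₁ * q₂) * ((M * m - 1) / Real.sqrt (M * m))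
      = 4 * Real.sqrt (q₁ * q₂) * Real.sinh (Real.log (M * m) / 2) :=
  drift_amgm_sinh_bound_general π π' hπ hπ' istar kstar hmin q₁ q₂ hq₁ hq₂ M m hM hm
end
end
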